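/- arXiv:2410.06211 — 2 statements merged into one kernel-verified Lean document; each statement's English description precedes it below -/
import Mathlib

section
/- For a vector v : Fin n → ℝ (n ≥ 2) with a strict unique maximizer i₀ (v i₀ > v j for all j ≠ i₀), the softmax of the scaled vector c·v satisfies softmax(c·v) i₀ → 1 as c → ∞. -/
noncomputable def softmax {n : ℕ} (v : Fin n → ℝ) (i : Fin n) : ℝ :=
  Real.exp (v i) / ∑ j, Real.exp (v j)

theorem softmax_scaling_limit {n : ℕ} (hn : 2 ≤ n) (v : Fin n → ℝ) (i₀ : Fin n)
    (hmax : ∀ j : Fin n, j ≠ i₀ → v j < v i₀) :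
    Filter.Tendsto (fun c : ℝ => softmax (c • v) i₀) Filter.atTop (nhds 1) := by
  have key : ∀ c : ℝ, softmax (c • v) i₀ = (∑ j, Real.exp (c * (v j - v i₀)))⁻¹ := by
    intro c
    have hpos : (0:ℝ) < ∑ j, Real.exp (c * v j) :=
      Finset.sum_pos (fun j _ => Real.exp_pos _) ⟨i₀, Finset.mem_univ _⟩
    rw [softmax, eq_comm, inv_eq_iff_eq_inv, eq_comm, inv_div, div_eq_iff (Real.exp_pos _).ne']
    simp only [Pi.smul_apply, smul_eq_mul, mul_sub, Real.exp_sub, Finset.sum_div]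
    rw [Finset.sum_mul]
    congr 1
    ext j
    field_simp
  simp only [key]
  have h1 : Filter.Tendsto (fun c : ℝ => ∑ j, Real.exp (c * (v j - v i₀)))
      Filter.atTop (nhds 1) := by
    have : (1:ℝ) = ∑ j : Fin n, if j = i₀ then (1:ℝ) else 0 := by simp
    rw [this]
    apply tendsto_finset_sum
    intro j _
    by_cases hj : j = i₀
    · simp [hj]
    · simp only [hj, if_false]
      have hneg : v j - v i₀ < 0 := sub_neg.mpr (hmax j hj)
      have : Filter.Tendsto (fun c : ℝ => c * (v j - v i₀)) Filter.atTop Filter.atBot :=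
        Filter.Tendsto.atTop_mul_const_of_neg hneg Filter.tendsto_id
      exact Real.tendsto_exp_atBot.comp this
  simpa using h1.inv₀ one_ne_zero
end

section
/- Let the attention score vector be a = softmax(Kq/√d) where exactly one entry of Kq/√d equals s+1 and all others equal values ≤ s − C. Then the attention-weighted value ∥a·V − V_{i₀}∥∞ ≤ 2·(n−1)·exp(−C−1)·max_j ∥V_j∥∞, so the attended output converges to the value vector at the target position as C → ∞. -/
theorem attention_retrieves_target {n d' : ℕ} (z : Fin n → ℝ) (i₀ : Fin n)
    (s C : ℝ) (hC : 0 < C)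
    (hz₀ : z i₀ = s + 1) (hz : ∀ j, j ≠ i₀ → z j ≤ s - C)
    (V : Fin n → Fin d' → ℝ) (B : ℝ) (hB0 : 0 ≤ B)
    (hB : ∀ j k, |V j k| ≤ B) :
    ∀ k : Fin d',
      |(∑ i, softmax z i * V i k) - V i₀ k|
        ≤ 2 * (n - 1 : ℝ) * Real.exp (-C - 1) * B := by
  intro k
  have hS : 0 < ∑ j, Real.exp (z j) :=
    Finset.sum_pos (fun j _ => Real.exp_pos _) ⟨i₀, Finset.mem_univ _⟩
  have hsum : ∑ i, softmax z i = 1 := by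
    simp [softmax, ← Finset.sum_div, div_self hS.ne']
  have hnn : ∀ i, 0 ≤ softmax z i := fun i => div_nonneg (Real.exp_pos _).le hS.le
  have hbound : ∀ j, j ≠ i₀ → softmax z j ≤ Real.exp (-C - 1) := by
    intro j hj
    have h1 : Real.exp (z j) ≤ Real.exp (s - C) := Real.exp_le_exp.2 (hz j hj)
    have h2 : Real.exp (s + 1) ≤ ∑ j, Real.exp (z j) := by
      rw [← hz₀]
      exact Finset.single_le_sum (fun j _ => (Real.exp_pos _).le) (Finset.mem_univ i₀)
    have h3 : softmax z j ≤ Real.exp (s - C) / Real.exp (s + 1) :=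
      div_le_div₀ (Real.exp_pos _).le h1 (Real.exp_pos _) h2
    calc softmax z j ≤ Real.exp (s - C) / Real.exp (s + 1) := h3
      _ = Real.exp (-C - 1) := by rw [← Real.exp_sub]; ring_nf
  have key : (∑ i, softmax z i * V i k) - V i₀ k
      = ∑ i, softmax z i * (V i k - V i₀ k) := by
    have : ∑ i, softmax z i * (V i k - V i₀ k)
        = (∑ i, softmax z i * V i k) - (∑ i, softmax z i) * V i₀ k := by
      rw [Finset.sum_mul]
      rw [← Finset.sum_sub_distrib]
      apply Finset.sum_congr rfl
      intro i _
      ring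
    rw [this, hsum, one_mul]
  rw [key]
  have hzero : softmax z i₀ * (V i₀ k - V i₀ k) = 0 := by ring
  calc |∑ i, softmax z i * (V i k - V i₀ k)|
      ≤ ∑ i, |softmax z i * (V i k - V i₀ k)| := Finset.abs_sum_le_sum_abs _ _
    _ = ∑ i ∈ Finset.univ.erase i₀, |softmax z i * (V i k - V i₀ k)| := by
        rw [Finset.sum_erase _ (by rw [hzero]; exact abs_zero)]
    _ ≤ ∑ i ∈ Finset.univ.erase i₀, Real.exp (-C - 1) * (2 * B) := by
        apply Finset.sum_le_sum
        intro i hi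
        have hi' : i ≠ i₀ := Finset.ne_of_mem_erase hi
        rw [abs_mul, abs_of_nonneg (hnn i)]
        apply mul_le_mul (hbound i hi') ?_ (abs_nonneg _) (Real.exp_pos _).le
        calc |V i k - V i₀ k| ≤ |V i k| + |V i₀ k| := abs_sub _ _
          _ ≤ B + B := add_le_add (hB i k) (hB i₀ k)
          _ = 2 * B := by ring
    _ = (n - 1 : ℝ) * (Real.exp (-C - 1) * (2 * B)) := by
        rw [Finset.sum_const, Finset.card_erase_of_mem (Finset.mem_univ _),
          Finset.card_univ, Fintype.card_fin, nsmul_eq_mul]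
        have hn : 1 ≤ n := Nat.one_le_iff_ne_zero.2 (by
          rintro rfl; exact absurd i₀.2 (Nat.not_lt_zero _))
        rw [Nat.cast_sub hn, Nat.cast_one]
    _ = 2 * (n - 1 : ℝ) * Real.exp (-C - 1) * B := by ring
end
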